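/- arXiv:math/9902117 — 6 statements merged into one kernel-verified Lean document; each statement's English description precedes it below -/
import Mathlib

section
/- In the cyclic deformation algebra S = R⟨x₁,x₂,x₃ | [xᵢ,xᵢ₊₁]_A = δ·xᵢ₊₂⟩ over a commutative ring R with A invertible and δ = A² − A⁻², the element Ω = A²x₁² + A⁻²x₂² + A²x₃² − A·x₁x₂x₃ is central. -/
open FreeAlgebra

/-- Skein relations of the punctured torus: `[xᵢ,xᵢ₊₁]_A = (A²−A⁻²)·xᵢ₊₂`. -/
inductive SkeinRel (R : Type) [CommRing R] (A : Rˣ) :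
    FreeAlgebra R (Fin 3) → FreeAlgebra R (Fin 3) → Prop
  | rel (i : Fin 3) :
      SkeinRel R A
        ((A : R) • (ι R i * ι R (i + 1)) - ((A⁻¹ : Rˣ) : R) • (ι R (i + 1) * ι R i))
        (((A : R) ^ 2 - ((A⁻¹ : Rˣ) : R) ^ 2) • ι R (i + 2))

noncomputable def x (R : Type) [CommRing R] (A : Rˣ) (i : Fin 3) : RingQuot (SkeinRel R A) :=
  RingQuot.mkAlgHom R (SkeinRel R A) (ι R i)

/-- The element `Ω = A²x₁² + A⁻²x₂² + A²x₃² − A·x₁x₂x₃`. -/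
noncomputable def Omega (R : Type) [CommRing R] (A : Rˣ) : RingQuot (SkeinRel R A) :=
  (A : R) ^ 2 • (x R A 0) ^ 2 + ((A⁻¹ : Rˣ) : R) ^ 2 • (x R A 1) ^ 2
    + (A : R) ^ 2 • (x R A 2) ^ 2 - (A : R) • (x R A 0 * x R A 1 * x R A 2)

section Aux

variable {R : Type} [CommRing R] (A : Rˣ) {S : Type} [Ring S] [Algebra R S]

lemma skein_key0 (a b c : S)
    (h1 : (A:R) • (a*b) - ((A⁻¹:Rˣ):R) • (b*a) = ((A:R)^2 - ((A⁻¹:Rˣ):R)^2) • c)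
    (h2 : (A:R) • (b*c) - ((A⁻¹:Rˣ):R) • (c*b) = ((A:R)^2 - ((A⁻¹:Rˣ):R)^2) • a)
    (h3 : (A:R) • (c*a) - ((A⁻¹:Rˣ):R) • (a*c) = ((A:R)^2 - ((A⁻¹:Rˣ):R)^2) • b) :
    ((A:R)^2 • a^2 + ((A⁻¹:Rˣ):R)^2 • b^2 + (A:R)^2 • c^2 - (A:R) • (a*b*c)) * a
      = a * ((A:R)^2 • a^2 + ((A⁻¹:Rˣ):R)^2 • b^2 + (A:R)^2 • c^2 - (A:R) • (a*b*c)) := by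
  linear_combination (norm := noncomm_ring
      [smul_smul, smul_sub, smul_add, smul_neg, neg_smul, sub_smul, add_smul, mul_smul_comm,
       smul_mul_assoc, pow_succ, pow_zero, one_mul, mul_one, mul_assoc,
       Units.mul_inv_cancel_left, Units.inv_mul_cancel_left, Units.mul_inv, Units.inv_mul])
    (-((A:R) • (h1 * b)) - ((A⁻¹:Rˣ):R) • (b * h1) + a * c * h1 - a * h2 * a + a * a * h2
      + ((A⁻¹:Rˣ):R) • (h3 * c) - a * h3 * b + (A:R) • (c * h3))

lemma skein_key1 (a b c : S)
    (h1 : (A:R) • (a*b) - ((A⁻¹:Rˣ):R) • (b*a) = ((A:R)^2 - ((A⁻¹:Rˣ):R)^2) • c)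
    (h2 : (A:R) • (b*c) - ((A⁻¹:Rˣ):R) • (c*b) = ((A:R)^2 - ((A⁻¹:Rˣ):R)^2) • a) :
    ((A:R)^2 • a^2 + ((A⁻¹:Rˣ):R)^2 • b^2 + (A:R)^2 • c^2 - (A:R) • (a*b*c)) * b
      = b * ((A:R)^2 • a^2 + ((A⁻¹:Rˣ):R)^2 • b^2 + (A:R)^2 • c^2 - (A:R) • (a*b*c)) := by
  linear_combination (norm := noncomm_ring
      [smul_smul, smul_sub, smul_add, smul_neg, neg_smul, sub_smul, add_smul, mul_smul_comm,
       smul_mul_assoc, pow_succ, pow_zero, one_mul, mul_one, mul_assoc,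
       Units.mul_inv_cancel_left, Units.inv_mul_cancel_left, Units.mul_inv, Units.inv_mul])
    ((A:R)^3 • (h1 * a) - (A:R)^2 • (h1 * (b*c)) + (A:R) • (a * h1)
      - (A:R) • (h2 * c) - (A:R)^3 • (c * h2) + (A:R)^2 • (a * b * h2))

lemma skein_key2 (a b c : S)
    (h2 : (A:R) • (b*c) - ((A⁻¹:Rˣ):R) • (c*b) = ((A:R)^2 - ((A⁻¹:Rˣ):R)^2) • a)
    (h3 : (A:R) • (c*a) - ((A⁻¹:Rˣ):R) • (a*c) = ((A:R)^2 - ((A⁻¹:Rˣ):R)^2) • b) :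
    ((A:R)^2 • a^2 + ((A⁻¹:Rˣ):R)^2 • b^2 + (A:R)^2 • c^2 - (A:R) • (a*b*c)) * c
      = c * ((A:R)^2 • a^2 + ((A⁻¹:Rˣ):R)^2 • b^2 + (A:R)^2 • c^2 - (A:R) • (a*b*c)) := by
  linear_combination (norm := noncomm_ring
      [smul_smul, smul_sub, smul_add, smul_neg, neg_smul, sub_smul, add_smul, mul_smul_comm,
       smul_mul_assoc, pow_succ, pow_zero, one_mul, mul_one, mul_assoc,
       Units.mul_inv_cancel_left, Units.inv_mul_cancel_left, Units.mul_inv, Units.inv_mul])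
    (((A⁻¹:Rˣ):R) • (h2 * b) - a * h2 * c + (A:R) • (b * h2)
      - (A:R) • (h3 * a) + h3 * (b*c) - ((A⁻¹:Rˣ):R) • (a * h3))

end Aux

lemma skein_rel' (R : Type) [CommRing R] (A : Rˣ) (i : Fin 3) :
    (A : R) • (x R A i * x R A (i+1)) - ((A⁻¹ : Rˣ) : R) • (x R A (i+1) * x R A i)
      = (((A : R))^2 - ((A⁻¹ : Rˣ) : R)^2) • x R A (i+2) := by
  have h := RingQuot.mkAlgHom_rel R (SkeinRel.rel (R := R) (A := A) i)
  simpa [x, map_sub, map_smul, map_mul] using h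

lemma omega_comm_x (R : Type) [CommRing R] (A : Rˣ) (i : Fin 3) :
    Omega R A * x R A i = x R A i * Omega R A := by
  have h1 := skein_rel' R A 0
  have h2 := skein_rel' R A 1
  have h3 := skein_rel' R A 2
  rw [show ((0:Fin 3)+1) = 1 from rfl, show ((0:Fin 3)+2) = 2 from rfl] at h1
  rw [show ((1:Fin 3)+1) = 2 from rfl, show ((1:Fin 3)+2) = 0 from rfl] at h2
  rw [show ((2:Fin 3)+1) = 0 from rfl, show ((2:Fin 3)+2) = 1 from rfl] at h3
  fin_cases i
  · exact skein_key0 A _ _ _ h1 h2 h3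
  · exact skein_key1 A _ _ _ h1 h2
  · exact skein_key2 A _ _ _ h2 h3

/-- `Ω = A²x₁² + A⁻²x₂² + A²x₃² − A·x₁x₂x₃` is central in the cyclic
deformation algebra `S = R⟨x₁,x₂,x₃ | [xᵢ,xᵢ₊₁]_A = δ·xᵢ₊₂⟩`. -/
theorem stmt5 (R : Type) [CommRing R] (A : Rˣ) (s : RingQuot (SkeinRel R A)) :
    Omega R A * s = s * Omega R A := by
  obtain ⟨y, rfl⟩ := RingQuot.mkAlgHom_surjective R (SkeinRel R A) s
  induction y using FreeAlgebra.induction with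
  | grade0 r =>
      rw [AlgHom.commutes]
      exact (Algebra.commutes r (Omega R A)).symm
  | grade1 i => exact omega_comm_x R A i
  | mul p q hp hq =>
      rw [map_mul, ← mul_assoc, hp, mul_assoc, hq, mul_assoc]
  | add p q hp hq =>
      rw [map_add, mul_add, add_mul, hp, hq]
end

section
/- Given finitely many pairwise distinct nonzero points v₁, …, vₖ ∈ ℤ² (considered up to sign), there exists w ∈ ℤ² such that w is not parallel to any vᵢ and the set {vᵢ + w, vᵢ − w : 1 ≤ i ≤ k} contains an element u of strictly maximal Euclidean norm which is realized by exactly one pair (i, ε) with ε ∈ {+,−} (up to overall sign). -/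
/-- Euclidean complexity of a lattice point. -/
def cpx (p : ℤ × ℤ) : ℤ := p.1 ^ 2 + p.2 ^ 2

/-- Sign attached to a Boolean (`+` or `−`). -/
def sgn (b : Bool) : ℤ := if b then 1 else -1

lemma key (z : ℤ × ℤ) (hz : z ≠ 0) (T : ℤ) (hT : |z.1| < T) :
    z.1 + T * z.2 ≠ 0 := by
  rcases eq_or_ne z.2 0 with h2 | h2
  · have h1 : z.1 ≠ 0 := by
      intro h1; exact hz (Prod.ext h1 h2)
    simpa [h2] using h1
  · intro h
    have he : |z.1| = |T * z.2| := by
      have : z.1 = -(T * z.2) := by linarith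
      rw [this, abs_neg]
    have hz2 : 1 ≤ |z.2| := Int.one_le_abs h2
    have hTT : T ≤ |T| := le_abs_self T
    have hTn : 0 ≤ |T| := abs_nonneg T
    have : T ≤ |z.1| := by
      rw [he, abs_mul]; nlinarith
    linarith

lemma cpx_nonneg (p : ℤ × ℤ) : 0 ≤ cpx p := by unfold cpx; positivity

lemma expand (p : ℤ × ℤ) (b : Bool) (w : ℤ × ℤ) :
    cpx (p + sgn b • w) = cpx p + 2 * sgn b * (p.1 * w.1 + p.2 * w.2) + cpx w := by
  cases b <;>
    simp [cpx, sgn, Prod.fst_add, Prod.snd_add, Prod.smul_fst, Prod.smul_snd, smul_eq_mul] <;>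
    ring

/-- given pairwise distinct (up to sign) nonzero `v₁, …, vₖ ∈ ℤ²`, there
is a `w ∈ ℤ²` not parallel to any `vᵢ` such that among the points `vᵢ ± w` there is one
of strictly maximal Euclidean complexity, realized by exactly one pair `(i, ε)`. -/
theorem stmt9 {k : ℕ} (hk : 0 < k) (v : Fin k → ℤ × ℤ)
    (hv0 : ∀ i, v i ≠ 0)
    (hdist : ∀ i j, i ≠ j → v i ≠ v j ∧ v i ≠ -v j) :
    ∃ w : ℤ × ℤ,
      (∀ i, w.1 * (v i).2 - w.2 * (v i).1 ≠ 0) ∧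
      ∃ (i : Fin k) (ε : Bool), ∀ (j : Fin k) (η : Bool),
        (j, η) ≠ (i, ε) → cpx (v j + sgn η • w) < cpx (v i + sgn ε • w) := by
  have hne : (Finset.univ : Finset (Fin k)).Nonempty := ⟨⟨0, hk⟩, Finset.mem_univ _⟩
  set S : ℤ := Finset.univ.sup' hne (fun i => |(v i).1| + |(v i).2|) with hS
  have hSb : ∀ i, |(v i).1| + |(v i).2| ≤ S :=
    fun i => Finset.le_sup' (fun i => |(v i).1| + |(v i).2|) (Finset.mem_univ i)
  have hSnn : 0 ≤ S := by
    have := hSb ⟨0, hk⟩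
    have h1 := abs_nonneg (v ⟨0, hk⟩).1
    have h2 := abs_nonneg (v ⟨0, hk⟩).2
    linarith
  set T : ℤ := 2 * S + 1 with hT
  set d : Fin k → ℤ := fun i => (v i).1 + T * (v i).2 with hd
  have hd0 : ∀ i, d i ≠ 0 := by
    intro i
    refine key (v i) (hv0 i) T ?_
    have := hSb i; have := abs_nonneg (v i).2
    simp only [hT]; linarith
  have hdabs : ∀ i j, i ≠ j → |d i| ≠ |d j| := by
    intro i j hij h
    rcases abs_eq_abs.mp h with h' | h'
    · refine key (v i - v j) (sub_ne_zero.mpr (hdist i j hij).1) T ?_ ?_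
      · have hi := hSb i; have hj := hSb j
        have := abs_sub (v i).1 (v j).1
        have h1 := abs_nonneg (v i).2; have h2 := abs_nonneg (v j).2
        simp only [hT, Prod.fst_sub]
        linarith
      · simp only [Prod.fst_sub, Prod.snd_sub]
        simp only [hd] at h'
        ring_nf
        ring_nf at h'
        linarith
    · refine key (v i + v j) (by
        intro hz
        exact (hdist i j hij).2 (by linear_combination (norm := module) hz)) T ?_ ?_
      · have hi := hSb i; have hj := hSb j
        have := abs_add_le (v i).1 (v j).1
        have h1 := abs_nonneg (v i).2; have h2 := abs_nonneg (v j).2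
        simp only [hT, Prod.fst_add]
        linarith
      · simp only [Prod.fst_add, Prod.snd_add]
        simp only [hd] at h'
        linarith
  obtain ⟨i, -, hmax⟩ := Finset.exists_max_image Finset.univ (fun j => |d j|) hne
  set N : ℤ := 1 + Finset.univ.sup' hne (fun j => cpx (v j)) with hN
  have hNb : ∀ j, cpx (v j) ≤ N - 1 := by
    intro j
    have := Finset.le_sup' (fun j => cpx (v j)) (Finset.mem_univ j)
    simp only [hN]; linarith
  have hN1 : 1 ≤ N := by
    have := hNb i; have := cpx_nonneg (v i); linarith
  refine ⟨(N, N * T), ?_, i, decide (0 < d i), ?_⟩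
  · intro j
    have hkey : (v j).2 + T * (-(v j).1) ≠ 0 := by
      refine key ((v j).2, -(v j).1) ?_ T ?_
      · intro hz
        apply hv0 j
        rw [Prod.ext_iff] at hz ⊢
        simp at hz
        exact ⟨hz.2, hz.1⟩
      · have := hSb j; have := abs_nonneg (v j).1
        simp only [hT]; linarith
    intro h
    apply hkey
    have : N * ((v j).2 + T * (-(v j).1)) = 0 := by linear_combination h
    rcases mul_eq_zero.mp this with h' | h'
    · omega
    · exact h'
  · intro j η hji
    rw [expand, expand]
    have hdot : ∀ m : Fin k, (v m).1 * N + (v m).2 * (N * T) = N * d m := by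
      intro m; simp only [hd]; ring
    simp only
    rw [hdot i, hdot j]
    have hsgn : ∀ m : Fin k, sgn (decide (0 < d m)) * d m = |d m| := by
      intro m
      rcases lt_trichotomy (d m) 0 with h | h | h
      · rw [abs_of_neg h]; simp [sgn, h.not_gt]
      · exact absurd h (hd0 m)
      · rw [abs_of_pos h]; simp [sgn, h]
    have hsgn' : ∀ m : Fin k, sgn (!decide (0 < d m)) * d m = -|d m| := by
      intro m
      rcases lt_trichotomy (d m) 0 with h | h | h
      · rw [abs_of_neg h]; simp [sgn, h.not_gt]
      · exact absurd h (hd0 m)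
      · rw [abs_of_pos h]; simp [sgn, h]
    have e : ∀ (b : Bool) (m : Fin k),
        2 * sgn b * (N * d m) = 2 * N * (sgn b * d m) := by intros; ring
    rcases eq_or_ne j i with rfl | hji'
    · have hη : η = !decide (0 < d j) := by
        rcases Bool.eq_or_eq_not η (decide (0 < d j)) with h | h
        · exact absurd (by rw [h]) hji
        · exact h
      subst hη
      have h1 : 1 ≤ |d j| := Int.one_le_abs (hd0 j)
      rw [e, e, hsgn, hsgn']
      nlinarith
    · have hlt : |d j| ≤ |d i| - 1 := by
        have := hmax j (Finset.mem_univ j)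
        have := hdabs j i hji'
        omega
      have hA : sgn η * d j ≤ |d i| - 1 := by
        have : sgn η * d j ≤ |d j| := by
          cases η <;> simp [sgn] <;> [exact neg_le_abs _; exact le_abs_self _]
        linarith
      have hcj := hNb j
      have hci := cpx_nonneg (v i)
      rw [e, e, hsgn]
      have h1 : 1 ≤ |d i| := Int.one_le_abs (hd0 i)
      nlinarith [mul_le_mul_of_nonneg_left hA (by positivity : (0:ℤ) ≤ 2 * N)]
end

section
/- Let R be an integral domain and A ∈ Rˣ a unit. Let M be the free R-module on the set B = {(a,b,c) ∈ ℕ³ : a ≡ b ≡ c mod 2} with an R-bilinear product satisfying v·w = A^{φ(v,w)}·(v+w) + (R-combination of basis elements of strictly smaller complexity c(a,b,c)=a²+b²+c²), where φ((a,b,c),(a',b',c')) = (ab'−ba'+bc'−cb'+ca'−ac')/2. Then M has no zero divisors: if α ≠ 0 and β ≠ 0 in M, then α·β ≠ 0. -/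
open Finsupp

/-- Triples `(a,b,c) ∈ ℕ³` with `a ≡ b ≡ c (mod 2)`: the standard basis of the skein
module of the four-punctured sphere. -/
abbrev B4 : Type := {t : ℕ × ℕ × ℕ // t.1 % 2 = t.2.1 % 2 ∧ t.2.1 % 2 = t.2.2 % 2}

instance : Add B4 :=
  ⟨fun v w => ⟨(v.1.1 + w.1.1, v.1.2.1 + w.1.2.1, v.1.2.2 + w.1.2.2), by
    obtain ⟨⟨a, b, c⟩, h1, h2⟩ := v
    obtain ⟨⟨a', b', c'⟩, h1', h2'⟩ := w
    simp only at h1 h2 h1' h2' ⊢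
    omega⟩⟩

/-- Complexity `a² + b² + c²` of a triple. -/
def cB (t : B4) : ℕ := t.1.1 ^ 2 + t.1.2.1 ^ 2 + t.1.2.2 ^ 2

lemma cB_add (v w : B4) :
    cB (v + w) = (v.1.1 + w.1.1) ^ 2 + (v.1.2.1 + w.1.2.1) ^ 2 + (v.1.2.2 + w.1.2.2) ^ 2 := rfl

lemma B4_add_fst (v w : B4) : (v + w).1.1 = v.1.1 + w.1.1 := rfl
lemma B4_add_snd (v w : B4) : (v + w).1.2.1 = v.1.2.1 + w.1.2.1 := rfl
lemma B4_add_trd (v w : B4) : (v + w).1.2.2 = v.1.2.2 + w.1.2.2 := rfl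

lemma cross4 (v1 w1 v2 w2 : B4) (hs : v1 + w1 = v2 + w2) (hne : v1 ≠ v2) :
    cB (v1 + w1) < cB (v1 + w2) ∨ cB (v1 + w1) < cB (v2 + w1) := by
  by_contra hcon
  push_neg at hcon
  obtain ⟨h1, h2⟩ := hcon
  rw [cB_add, cB_add] at h1 h2
  have e1 : v1.1.1 + w1.1.1 = v2.1.1 + w2.1.1 := congrArg (fun x : B4 => x.1.1) hs
  have e2 : v1.1.2.1 + w1.1.2.1 = v2.1.2.1 + w2.1.2.1 := congrArg (fun x : B4 => x.1.2.1) hs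
  have e3 : v1.1.2.2 + w1.1.2.2 = v2.1.2.2 + w2.1.2.2 := congrArg (fun x : B4 => x.1.2.2) hs
  set a := v1.1.1; set b := v1.1.2.1; set c := v1.1.2.2
  set a' := v2.1.1; set b' := v2.1.2.1; set c' := v2.1.2.2
  set d := w1.1.1; set e := w1.1.2.1; set f := w1.1.2.2
  set d' := w2.1.1; set e' := w2.1.2.1; set f' := w2.1.2.2
  have E1 : (a : ℤ) + d = a' + d' := by exact_mod_cast e1
  have E2 : (b : ℤ) + e = b' + e' := by exact_mod_cast e2
  have E3 : (c : ℤ) + f = c' + f' := by exact_mod_cast e3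
  have H1 : ((a : ℤ) + d') ^ 2 + ((b : ℤ) + e') ^ 2 + ((c : ℤ) + f') ^ 2
      ≤ ((a : ℤ) + d) ^ 2 + ((b : ℤ) + e) ^ 2 + ((c : ℤ) + f) ^ 2 := by exact_mod_cast h1
  have H2 : ((a' : ℤ) + d) ^ 2 + ((b' : ℤ) + e) ^ 2 + ((c' : ℤ) + f) ^ 2
      ≤ ((a : ℤ) + d) ^ 2 + ((b : ℤ) + e) ^ 2 + ((c : ℤ) + f) ^ 2 := by exact_mod_cast h2
  have I1 : ((a : ℤ) + d') ^ 2 + ((a' : ℤ) + d) ^ 2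
      = 2 * ((a : ℤ) + d) ^ 2 + 2 * ((a : ℤ) - a') ^ 2 := by
    linear_combination (-((a : ℤ) + d - a' - d') - 2 * ((a : ℤ) + d')) * E1
  have I2 : ((b : ℤ) + e') ^ 2 + ((b' : ℤ) + e) ^ 2
      = 2 * ((b : ℤ) + e) ^ 2 + 2 * ((b : ℤ) - b') ^ 2 := by
    linear_combination (-((b : ℤ) + e - b' - e') - 2 * ((b : ℤ) + e')) * E2
  have I3 : ((c : ℤ) + f') ^ 2 + ((c' : ℤ) + f) ^ 2
      = 2 * ((c : ℤ) + f) ^ 2 + 2 * ((c : ℤ) - c') ^ 2 := by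
    linear_combination (-((c : ℤ) + f - c' - f') - 2 * ((c : ℤ) + f')) * E3
  have sa : ((a : ℤ) - a') ^ 2 = 0 := by
    linarith [sq_nonneg ((b : ℤ) - b'), sq_nonneg ((c : ℤ) - c'), sq_nonneg ((a : ℤ) - a')]
  have sb : ((b : ℤ) - b') ^ 2 = 0 := by
    linarith [sq_nonneg ((b : ℤ) - b'), sq_nonneg ((c : ℤ) - c'), sq_nonneg ((a : ℤ) - a')]
  have sc : ((c : ℤ) - c') ^ 2 = 0 := by
    linarith [sq_nonneg ((b : ℤ) - b'), sq_nonneg ((c : ℤ) - c'), sq_nonneg ((a : ℤ) - a')]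
  have ha : a = a' := by
    have := pow_eq_zero_iff (n := 2) (by norm_num) |>.mp sa
    have := sub_eq_zero.mp this
    exact_mod_cast this
  have hb : b = b' := by
    have := pow_eq_zero_iff (n := 2) (by norm_num) |>.mp sb
    have := sub_eq_zero.mp this
    exact_mod_cast this
  have hc : c = c' := by
    have := pow_eq_zero_iff (n := 2) (by norm_num) |>.mp sc
    have := sub_eq_zero.mp this
    exact_mod_cast this
  exact hne (Subtype.ext (Prod.ext ha (Prod.ext hb hc)))

lemma add_left_canc4 (v w w' : B4) (h : v + w = v + w') : w = w' := by
  have e1 : v.1.1 + w.1.1 = v.1.1 + w'.1.1 := congrArg (fun x : B4 => x.1.1) h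
  have e2 : v.1.2.1 + w.1.2.1 = v.1.2.1 + w'.1.2.1 := congrArg (fun x : B4 => x.1.2.1) h
  have e3 : v.1.2.2 + w.1.2.2 = v.1.2.2 + w'.1.2.2 := congrArg (fun x : B4 => x.1.2.2) h
  exact Subtype.ext (Prod.ext (by omega) (Prod.ext (by omega) (by omega)))

/-- The exponent `φ((a,b,c),(a',b',c')) = (ab'−ba'+bc'−cb'+ca'−ac')/2`. -/
def phi4 (v w : B4) : ℤ :=
  ((v.1.1 : ℤ) * w.1.2.1 - v.1.2.1 * w.1.1 + v.1.2.1 * w.1.2.2 - v.1.2.2 * w.1.2.1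
    + v.1.2.2 * w.1.1 - v.1.1 * w.1.2.2) / 2

/-- abstract form of "the skein algebra of the four-punctured sphere has
no zero divisors".  `R` is a domain, `A ∈ Rˣ`, and `mul` a bilinear product on the free
`R`-module on `B4` satisfying `v·w = A^{φ(v,w)}·(v+w) +` (terms of strictly smaller
complexity).  Then a product of nonzero elements is nonzero. -/
theorem stmt11 {R : Type} [CommRing R] [IsDomain R] (A : Rˣ)
    (mul : (B4 →₀ R) →ₗ[R] (B4 →₀ R) →ₗ[R] (B4 →₀ R))
    (hmul : ∀ v w : B4, ∃ lower : B4 →₀ R,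
      (∀ u ∈ lower.support, cB u < cB (v + w)) ∧
      mul (single v 1) (single w 1)
        = ((A ^ phi4 v w : Rˣ) : R) • single (v + w) 1 + lower)
    (α β : B4 →₀ R) (hα : α ≠ 0) (hβ : β ≠ 0) :
    mul α β ≠ 0 := by
  classical
  set P : Finset (B4 × B4) := α.support ×ˢ β.support with hPdef
  have hP : P.Nonempty :=
    Finset.Nonempty.product (Finsupp.support_nonempty_iff.mpr hα)
      (Finsupp.support_nonempty_iff.mpr hβ)
  obtain ⟨p0, hp0, hmax⟩ := P.exists_max_image (fun p => cB (p.1 + p.2)) hP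
  set s : B4 := p0.1 + p0.2 with hsdef
  -- expansion
  have expand : mul α β
      = ∑ p ∈ P, (α p.1 * β p.2) • mul (single p.1 1) (single p.2 1) := by
    have h1 : α = ∑ v ∈ α.support, (α v) • single v (1 : R) := by
      conv_lhs => rw [← Finsupp.sum_single α]
      rw [Finsupp.sum]
      refine Finset.sum_congr rfl fun v hv => ?_
      rw [Finsupp.smul_single' (α v) v 1, mul_one]
    have h2 : β = ∑ w ∈ β.support, (β w) • single w (1 : R) := by
      conv_lhs => rw [← Finsupp.sum_single β]
      rw [Finsupp.sum]
      refine Finset.sum_congr rfl fun w hw => ?_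
      rw [Finsupp.smul_single' (β w) w 1, mul_one]
    conv_lhs => rw [h1, h2]
    rw [LinearMap.map_sum₂, hPdef, Finset.sum_product]
    refine Finset.sum_congr rfl fun v hv => ?_
    rw [map_sum]
    refine Finset.sum_congr rfl fun w hw => ?_
    rw [LinearMap.map_smul₂, map_smul, smul_smul]
  -- coefficient at s
  have hcoef : (mul α β) s = (α p0.1 * β p0.2) * ((A ^ phi4 p0.1 p0.2 : Rˣ) : R) := by
    rw [expand, Finsupp.finset_sum_apply]
    rw [Finset.sum_eq_single p0]
    · obtain ⟨lower, hlow, heq⟩ := hmul p0.1 p0.2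
      have hls : lower s = 0 := by
        by_contra hne
        exact lt_irrefl _ (hlow s (Finsupp.mem_support_iff.mpr hne))
      rw [Finsupp.smul_apply, heq, Finsupp.add_apply, Finsupp.smul_apply, hls,
        ← hsdef, Finsupp.single_eq_same]
      simp [smul_eq_mul]
    · intro p hp hpne
      obtain ⟨lower, hlow, heq⟩ := hmul p.1 p.2
      have hmem := Finset.mem_product.mp hp
      have hle : cB (p.1 + p.2) ≤ cB s := hmax p hp
      have hls : lower s = 0 := by
        by_contra hne
        exact absurd (lt_of_lt_of_le (hlow s (Finsupp.mem_support_iff.mpr hne)) hle)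
          (lt_irrefl _)
      have hsing : (single (p.1 + p.2) (1 : R)) s = 0 := by
        rw [Finsupp.single_apply]
        rw [if_neg]
        intro hsum
        -- p.1 + p.2 = s = p0.1 + p0.2, p ≠ p0
        have hne1 : p.1 ≠ p0.1 := by
          intro h1
          apply hpne
          have h2 : p.2 = p0.2 := add_left_canc4 p.1 p.2 p0.2 (by rw [hsum, hsdef, h1])
          exact Prod.ext h1 h2
        have := cross4 p.1 p.2 p0.1 p0.2 (by rw [hsum, hsdef]) hne1
        rcases this with h | h
        · -- cB (p.1+p.2) < cB (p.1 + p0.2); but (p.1, p0.2) ∈ P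
          have hin : (p.1, p0.2) ∈ P := by
            rw [hPdef, Finset.mem_product]
            exact ⟨(Finset.mem_product.mp hp).1, (Finset.mem_product.mp hp0).2⟩
          have := hmax (p.1, p0.2) hin
          rw [hsum] at h
          simp only at this
          omega
        · have hin : (p0.1, p.2) ∈ P := by
            rw [hPdef, Finset.mem_product]
            exact ⟨(Finset.mem_product.mp hp0).1, (Finset.mem_product.mp hp).2⟩
          have := hmax (p0.1, p.2) hin
          rw [hsum] at h
          simp only at this
          omega
      rw [Finsupp.smul_apply, heq, Finsupp.add_apply, Finsupp.smul_apply, hls, hsing]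
      simp
    · intro h
      exact absurd hp0 h
  intro hzero
  rw [hzero] at hcoef
  have hβ0 : β p0.2 ≠ 0 := Finsupp.mem_support_iff.mp (Finset.mem_product.mp hp0).2
  have hα0 : α p0.1 ≠ 0 := Finsupp.mem_support_iff.mp (Finset.mem_product.mp hp0).1
  have hA : ((A ^ phi4 p0.1 p0.2 : Rˣ) : R) ≠ 0 := Units.ne_zero _
  simp only [Finsupp.coe_zero, Pi.zero_apply] at hcoef
  exact hA (by
    rcases mul_eq_zero.mp hcoef.symm with h | h
    · rcases mul_eq_zero.mp h with h' | h'
      · exact absurd h' hα0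
      · exact absurd h' hβ0
    · exact h)
end

section
/- Let V₁, V₂ be finite nonempty subsets of ℝⁿ. Then there exists a pair (v,w) ∈ V₁ × V₂ maximizing ‖v+w‖ among all sums v'+w' with (v',w') ∈ V₁ × V₂, such that (v,w) is the unique pair in V₁ × V₂ whose sum equals v + w. -/
/-- for finite nonempty `V₁, V₂ ⊆ ℝⁿ` there is a pair `(v, w) ∈ V₁ × V₂`
maximizing `‖v + w‖` such that `(v, w)` is the unique pair in `V₁ × V₂` whose sum
equals `v + w`. -/
theorem stmt12 {n : ℕ} (V₁ V₂ : Finset (EuclideanSpace ℝ (Fin n)))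
    (h1 : V₁.Nonempty) (h2 : V₂.Nonempty) :
    ∃ v ∈ V₁, ∃ w ∈ V₂,
      (∀ v' ∈ V₁, ∀ w' ∈ V₂, ‖v' + w'‖ ≤ ‖v + w‖) ∧
      (∀ v' ∈ V₁, ∀ w' ∈ V₂, v' + w' = v + w → v' = v ∧ w' = w) := by
  obtain ⟨p, hp, hmax⟩ := (V₁ ×ˢ V₂).exists_max_image (fun p => ‖p.1 + p.2‖)
    (h1.product h2)
  obtain ⟨hv, hw⟩ := Finset.mem_product.mp hp
  refine ⟨p.1, hv, p.2, hw, ?_, ?_⟩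
  · intro v' hv' w' hw'
    exact hmax (v', w') (Finset.mem_product.mpr ⟨hv', hw'⟩)
  · intro v' hv' w' hw' hsum
    have key : v' = p.1 := by
      by_contra hne
      set a := v' + p.2
      set b := p.1 + w'
      have hab : a + b = (p.1 + p.2) + (p.1 + p.2) := by
        calc a + b = (v' + w') + (p.1 + p.2) := by simp only [a, b]; abel
        _ = (p.1 + p.2) + (p.1 + p.2) := by rw [hsum]
      have hanb : a ≠ b := by
        intro h
        apply hne
        have e1 : v' - p.1 = p.2 - w' := by
          rw [sub_eq_sub_iff_add_eq_add, hsum, add_comm]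
        have e2 : v' - p.1 = w' - p.2 := by
          rw [sub_eq_sub_iff_add_eq_add]; exact h.trans (add_comm _ _)
        have h4 : p.2 - w' = w' - p.2 := e1.symm.trans e2
        have h5 : p.2 - w' + (p.2 - w') = 0 := by nth_rewrite 2 [h4]; abel
        have h6 : (2 : ℝ) • (p.2 - w') = 0 := by rw [two_smul]; exact h5
        have h7 : p.2 = w' := by
          have := (smul_eq_zero.mp h6).resolve_left two_ne_zero
          rwa [sub_eq_zero] at this
        rw [← h7] at hsum
        exact add_right_cancel hsum
      have ha : ‖a‖ ≤ ‖p.1 + p.2‖ := hmax (v', p.2) (Finset.mem_product.mpr ⟨hv', hw⟩)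
      have hb : ‖b‖ ≤ ‖p.1 + p.2‖ := hmax (p.1, w') (Finset.mem_product.mpr ⟨hv, hw'⟩)
      have hpar := parallelogram_law_with_norm ℝ a b
      have habn : ‖a + b‖ = 2 * ‖p.1 + p.2‖ := by
        rw [hab, ← two_smul ℝ, norm_smul]
        simp
      have hdpos : 0 < ‖a - b‖ := by
        rw [norm_pos_iff]
        exact sub_ne_zero.mpr hanb
      nlinarith [norm_nonneg a, norm_nonneg b, norm_nonneg (p.1 + p.2)]
    refine ⟨key, ?_⟩
    rw [key] at hsum
    exact add_left_cancel hsum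
end

section
/- Let R be a commutative ring, A ∈ Rˣ. In the quotient algebra T = S/(Ω − (2A² + 2A⁻²)) where S = R⟨x₁,x₂,x₃ | [xᵢ,xᵢ₊₁]_A = δxᵢ₊₂⟩ and Ω = A²x₁² + A⁻²x₂² + A²x₃² − A·x₁x₂x₃ (the presentation of the skein algebra of the closed torus), specialize R = ℤ, A = −1: then T is isomorphic to ℤ[x₁,x₂,x₃]/(x₁² + x₂² + x₃² − x₁x₂x₃ − 4). -/
/-!
At `A = −1` the coefficient `A² − A⁻²` of the skein relations vanishes, so they say exactly that
the generators commute; the quotient is therefore commutative, and the only relation left is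
`Ω = 4`, i.e. `x₁² + x₂² + x₃² + x₁x₂x₃ = 4`. The sign change `xᵢ ↦ −Xᵢ` identifies this with
Fricke's polynomial.
-/

open FreeAlgebra

/-- The presentation of the Kauffman bracket skein algebra of the closed torus at
`R = ℤ`, `A = −1`: the skein relations `[xᵢ,xᵢ₊₁]_A = (A²−A⁻²)·xᵢ₊₂` together with
the boundary relation `Ω = A²x₁² + A⁻²x₂² + A²x₃² − A·x₁x₂x₃ = 2A² + 2A⁻²`. -/
inductive ClosedTorusRel : FreeAlgebra ℤ (Fin 3) → FreeAlgebra ℤ (Fin 3) → Prop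
  | skein (i : Fin 3) :
      ClosedTorusRel
        ((((-1 : ℤˣ) : ℤ)) • (ι ℤ i * ι ℤ (i + 1))
          - (((-1 : ℤˣ)⁻¹ : ℤˣ) : ℤ) • (ι ℤ (i + 1) * ι ℤ i))
        ((((-1 : ℤˣ) : ℤ) ^ 2 - (((-1 : ℤˣ)⁻¹ : ℤˣ) : ℤ) ^ 2) • ι ℤ (i + 2))
  | omega :
      ClosedTorusRel
        (((-1 : ℤˣ) : ℤ) ^ 2 • (ι ℤ 0) ^ 2 + (((-1 : ℤˣ)⁻¹ : ℤˣ) : ℤ) ^ 2 • (ι ℤ 1) ^ 2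
          + ((-1 : ℤˣ) : ℤ) ^ 2 • (ι ℤ 2) ^ 2
          - ((-1 : ℤˣ) : ℤ) • (ι ℤ 0 * ι ℤ 1 * ι ℤ 2))
        ((2 * ((-1 : ℤˣ) : ℤ) ^ 2 + 2 * (((-1 : ℤˣ)⁻¹ : ℤˣ) : ℤ) ^ 2)
          • (1 : FreeAlgebra ℤ (Fin 3)))

theorem FreeAlgebra.commute_of_commute_ι {R X A : Type*} [CommSemiring R] [Semiring A]
    [Algebra R A] (f : FreeAlgebra R X →ₐ[R] A) (h : ∀ i j, Commute (f (ι R i)) (f (ι R j)))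
    (a b : FreeAlgebra R X) : Commute (f a) (f b) := by
  have mem : ∀ x, f x ∈ Algebra.adjoin R (f '' Set.range (ι R)) := fun x => by
    rw [Algebra.adjoin_image, adjoin_range_ι]
    exact ⟨x, trivial, rfl⟩
  refine Algebra.commute_of_mem_adjoin_of_forall_mem_commute (mem b) ?_
  rintro _ ⟨_, ⟨j, rfl⟩, rfl⟩
  refine (Algebra.commute_of_mem_adjoin_of_forall_mem_commute (mem a) ?_).symm
  rintro _ ⟨_, ⟨i, rfl⟩, rfl⟩
  exact h j i

open MvPolynomial

/-- Fricke's trace polynomial: `tr a² + tr b² + tr (ab)² − tr a tr b tr (ab) − 4 = tr [a, b] − 2`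
on `SL₂`, so its zero set is the character variety of `ℤ ⊕ ℤ`. -/
noncomputable def frickePoly : MvPolynomial (Fin 3) ℤ :=
  X 0 ^ 2 + X 1 ^ 2 + X 2 ^ 2 - X 0 * X 1 * X 2 - 4

theorem map_frickePoly {B F : Type*} [CommRing B] [FunLike F (MvPolynomial (Fin 3) ℤ) B]
    [RingHomClass F (MvPolynomial (Fin 3) ℤ) B] (φ : F) :
    φ frickePoly = φ (X 0) ^ 2 + φ (X 1) ^ 2 + φ (X 2) ^ 2 - φ (X 0) * φ (X 1) * φ (X 2) - 4 := by
  simp only [frickePoly, map_sub, map_add, map_mul, map_pow, map_ofNat]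

noncomputable abbrev FrickeRing : Type :=
  MvPolynomial (Fin 3) ℤ ⧸ Ideal.span {frickePoly}

namespace ClosedTorusRel

noncomputable abbrev gen (i : Fin 3) : RingQuot ClosedTorusRel :=
  RingQuot.mkAlgHom ℤ ClosedTorusRel (ι ℤ i)

theorem commute_gen_succ (i : Fin 3) : Commute (gen i) (gen (i + 1)) := by
  have h := RingQuot.mkAlgHom_rel ℤ (skein i)
  norm_num at h
  exact neg_add_eq_zero.mp h

theorem commute_gen (i j : Fin 3) : Commute (gen i) (gen j) := by
  have : j = i ∨ j = i + 1 ∨ i = j + 1 := by fin_cases i <;> fin_cases j <;> decide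
  rcases this with rfl | rfl | rfl
  · exact Commute.refl _
  · exact commute_gen_succ i
  · exact (commute_gen_succ j).symm

noncomputable instance : CommRing (RingQuot ClosedTorusRel) where
  mul_comm a b := by
    obtain ⟨x, rfl⟩ := RingQuot.mkAlgHom_surjective ℤ ClosedTorusRel a
    obtain ⟨y, rfl⟩ := RingQuot.mkAlgHom_surjective ℤ ClosedTorusRel b
    exact FreeAlgebra.commute_of_commute_ι _ commute_gen x y

theorem omega_eq_four :
    gen 0 ^ 2 + gen 1 ^ 2 + gen 2 ^ 2 + gen 0 * gen 1 * gen 2 = 4 := by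
  have h := RingQuot.mkAlgHom_rel ℤ omega
  norm_num [map_ofNat] at h
  exact h

noncomputable def toFrickeRing : RingQuot ClosedTorusRel →ₐ[ℤ] FrickeRing :=
  RingQuot.liftAlgHom ℤ ⟨FreeAlgebra.lift ℤ fun i => -Ideal.Quotient.mk _ (X i), by
    rintro _ _ (i | _)
    · norm_num
      ring
    · norm_num [map_ofNat]
      linear_combination (map_frickePoly _).symm.trans (Ideal.Quotient.mk_singleton_self _)⟩

theorem toFrickeRing_gen (i : Fin 3) : toFrickeRing (gen i) = -Ideal.Quotient.mk _ (X i) := by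
  simp [toFrickeRing]

noncomputable def ofFrickeRing : FrickeRing →ₐ[ℤ] RingQuot ClosedTorusRel :=
  Ideal.Quotient.liftₐ _ (aeval fun i => -gen i) fun a ha => by
    obtain ⟨c, rfl⟩ := Ideal.mem_span_singleton'.1 ha
    suffices aeval (fun i => -gen i) frickePoly = 0 by rw [map_mul, this, mul_zero]
    simp only [map_frickePoly, aeval_X]
    linear_combination omega_eq_four

theorem ofFrickeRing_mk_X (i : Fin 3) : ofFrickeRing (Ideal.Quotient.mk _ (X i)) = -gen i :=
  aeval_X _ i

noncomputable def equivFrickeRing : RingQuot ClosedTorusRel ≃ₐ[ℤ] FrickeRing :=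
  AlgEquiv.ofAlgHom toFrickeRing ofFrickeRing
    (Ideal.Quotient.algHom_ext _ <| algHom_ext fun i => by simp [ofFrickeRing_mk_X, toFrickeRing_gen])
    (by ext; simp [ofFrickeRing_mk_X, toFrickeRing_gen])

end ClosedTorusRel

open MvPolynomial in
/-- the skein algebra of the closed torus at `R = ℤ`, `A = −1`
is isomorphic to `ℤ[x₁,x₂,x₃]/(x₁² + x₂² + x₃² − x₁x₂x₃ − 4)`. -/
theorem stmt17 :
    Nonempty (RingQuot ClosedTorusRel ≃+*
      (MvPolynomial (Fin 3) ℤ ⧸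
        Ideal.span {((X 0) ^ 2 + (X 1) ^ 2 + (X 2) ^ 2 - X 0 * X 1 * X 2
          - 4 : MvPolynomial (Fin 3) ℤ)})) := by
  exact ⟨ClosedTorusRel.equivFrickeRing.toRingEquiv⟩
end

section
/- The ring ℤ[x,y,z]/(x² + y² + z² − xyz − 4) is an integral domain. -/
open MvPolynomial Polynomial

noncomputable section Stmt18Aux
set_option maxHeartbeats 1000000
set_option synthInstance.maxHeartbeats 400000

/-- Auxiliary: `ℤ[x,y]`. -/
abbrev Stmt18.R2 := MvPolynomial (Fin 2) ℤ

namespace Stmt18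

/-- The Markov-type polynomial viewed as a monic quadratic in the last variable. -/
noncomputable def q : R2[X] :=
  Polynomial.X ^ 2 - Polynomial.C (MvPolynomial.X 0 * MvPolynomial.X 1) * Polynomial.X
    + Polynomial.C (MvPolynomial.X 0 ^ 2 + MvPolynomial.X 1 ^ 2 - 4)

lemma q_monic : q.Monic := by unfold q; monicity!

lemma q_natDegree : q.natDegree = 2 := by unfold q; compute_degree!

lemma no_root (g : R2) (h : Polynomial.eval g q = 0) : False := by
  have h' : g ^ 2 - (MvPolynomial.X 0 * MvPolynomial.X 1) * g
      + (MvPolynomial.X 0 ^ 2 + MvPolynomial.X 1 ^ 2 - 4) = 0 := by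
    simpa [q] using h
  have := congrArg (MvPolynomial.eval ![0, 3]) h'
  simp at this
  nlinarith [sq_nonneg (MvPolynomial.eval ![0, 3] g), this]

lemma q_irred : Irreducible q := by
  haveI : IsIntegrallyClosed R2 := inferInstance
  letI K := FractionRing R2
  rw [q_monic.irreducible_iff_irreducible_map_fraction_map (K := K)]
  rw [Polynomial.irreducible_iff_roots_eq_zero_of_degree_le_three]
  · by_contra hne
    obtain ⟨r, hr⟩ := Multiset.exists_mem_of_ne_zero hne
    have hroot : Polynomial.eval r (q.map (algebraMap R2 K)) = 0 :=
      (isRoot_of_mem_roots hr)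
    have hint : IsIntegral R2 r := ⟨q, q_monic, by
      rwa [Polynomial.eval_map] at hroot⟩
    obtain ⟨g, hg⟩ := IsIntegrallyClosed.isIntegral_iff.mp hint
    apply no_root g
    apply IsFractionRing.injective R2 K
    rw [map_zero, ← Polynomial.eval₂_hom, ← Polynomial.eval_map, hg]
    exact hroot
  · rw [natDegree_map_eq_of_injective (IsFractionRing.injective R2 K), q_natDegree]
  · rw [natDegree_map_eq_of_injective (IsFractionRing.injective R2 K), q_natDegree]; norm_num

lemma image_eq : (MvPolynomial.finSuccEquiv ℤ 2)
    ((X 0) ^ 2 + (X 1) ^ 2 + (X 2) ^ 2 - X 0 * X 1 * X 2 - 4 : MvPolynomial (Fin 3) ℤ) = q := by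
  have e1 : (finSuccEquiv ℤ 2) (X 1 : MvPolynomial (Fin 3) ℤ) = Polynomial.C (X 0) :=
    finSuccEquiv_X_succ (j := 0)
  have e2 : (finSuccEquiv ℤ 2) (X 2 : MvPolynomial (Fin 3) ℤ) = Polynomial.C (X 1) :=
    finSuccEquiv_X_succ (j := 1)
  simp [q, map_ofNat, finSuccEquiv_X_zero, e1, e2]
  ring

lemma f_prime : Prime ((X 0) ^ 2 + (X 1) ^ 2 + (X 2) ^ 2 - X 0 * X 1 * X 2
    - 4 : MvPolynomial (Fin 3) ℤ) := by
  apply UniqueFactorizationMonoid.irreducible_iff_prime.mp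
  rw [← MulEquiv.irreducible_iff (MvPolynomial.finSuccEquiv ℤ 2), image_eq]
  exact q_irred

end Stmt18
end Stmt18Aux

open MvPolynomial in
/-- the ring `ℤ[x,y,z]/(x² + y² + z² − xyz − 4)` is an integral domain. -/
theorem stmt18 :
    IsDomain (MvPolynomial (Fin 3) ℤ ⧸
      Ideal.span {((X 0) ^ 2 + (X 1) ^ 2 + (X 2) ^ 2 - X 0 * X 1 * X 2
        - 4 : MvPolynomial (Fin 3) ℤ)}) := by
  haveI := (Ideal.span_singleton_prime Stmt18.f_prime.ne_zero).mpr Stmt18.f_prime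
  exact Ideal.Quotient.isDomain _
end
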